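/- Rigidity in the Hersch-type bound: under the balanced condition, if λ_2(P_{g_w}) = 24 for g_w = e^{2w} g_r with Vol(S^4, g_w) = ω_4 and ∫ e^{4w} x_i dv_{g_r} = 0 for all i, then the coordinate functions x_i are eigenfunctions of P_{g_w} with eigenvalue 24, and e^{4w} ≡ 1, so g_w = g_r. -/

import Mathlib

open MeasureTheory

/-- The `i`-th standard coordinate function of `ℝ⁵` restricted to the round sphere `S⁴`. -/
noncomputable def sphereCoord (i : Fin 5)
    (p : Metric.sphere (0 : EuclideanSpace ℝ (Fin 5)) 1) : ℝ :=
  (p : EuclideanSpace ℝ (Fin 5)) i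

/-!
Each coordinate function `xᵢ` is an admissible test function for `λ₂(P_{g_w})` by the balanced
condition, so `24 ∫ xᵢ² e^{4w} ≤ ∫ xᵢ P_{g_r} xᵢ = 24 ∫ xᵢ²`. Summing over `i` and using
`∑ xᵢ² = 1` both sides become `24 Vol(S⁴)`, so every inequality is an equality and each `xᵢ` is a
`24`-eigenfunction of `P_{g_w} = e^{-4w} P_{g_r}`. Hence `e^{-4w} xᵢ = xᵢ` for all `i`, and since
the `xᵢ` have no common zero, `w ≡ 0`.
-/

local notation "S⁴" => Metric.sphere (0 : EuclideanSpace ℝ (Fin 5)) 1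

theorem sum_sphereCoord_sq (p : S⁴) : ∑ i, sphereCoord i p ^ 2 = 1 :=
  (EuclideanSpace.real_norm_sq_eq (p : EuclideanSpace ℝ (Fin 5))).symm.trans
    (by rw [norm_eq_of_mem_sphere p, one_pow])

theorem continuous_sphereCoord (i : Fin 5) : Continuous (sphereCoord i) :=
  (continuous_apply i).comp ((PiLp.continuous_ofLp _ _).comp continuous_subtype_val)

theorem sphereCoord_sq_le_one (i : Fin 5) (p : S⁴) : sphereCoord i p ^ 2 ≤ 1 :=
  sum_sphereCoord_sq p ▸
    Finset.single_le_sum (fun j _ => sq_nonneg (sphereCoord j p)) (Finset.mem_univ i)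

theorem exists_sphereCoord_ne_zero (p : S⁴) : ∃ i, sphereCoord i p ≠ 0 := by
  obtain ⟨i, -, hi⟩ := Finset.exists_ne_zero_of_sum_ne_zero
    (by rw [sum_sphereCoord_sq p]; exact one_ne_zero)
  exact ⟨i, pow_ne_zero_iff two_ne_zero |>.mp hi⟩

theorem eq_one_of_forall_mul_sphereCoord {p : S⁴} {a : ℝ}
    (h : ∀ i, a * sphereCoord i p = sphereCoord i p) : a = 1 := by
  obtain ⟨i, hi⟩ := exists_sphereCoord_ne_zero p
  exact mul_eq_right₀ hi |>.mp (h i)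

section Integrals

variable {μ : Measure S⁴} {f : S⁴ → ℝ}

theorem MeasureTheory.Integrable.sphereCoord_sq_mul (hf : Integrable f μ) (i : Fin 5) :
    Integrable (fun p => sphereCoord i p ^ 2 * f p) μ :=
  hf.bdd_mul ((continuous_sphereCoord i).pow 2).aestronglyMeasurable
    (.of_forall fun p => by
      rw [Real.norm_of_nonneg (sq_nonneg _)]; exact sphereCoord_sq_le_one i p)

theorem sum_integral_sphereCoord_sq_mul (hf : Integrable f μ) :
    ∑ i, ∫ p, sphereCoord i p ^ 2 * f p ∂μ = ∫ p, f p ∂μ := by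
  rw [← integral_finsetSum _ fun i _ => hf.sphereCoord_sq_mul i]
  simp only [← Finset.sum_mul, sum_sphereCoord_sq, one_mul]

theorem sum_integral_sphereCoord_sq [IsFiniteMeasure μ] :
    ∑ i, ∫ p, sphereCoord i p ^ 2 ∂μ = μ.real Set.univ := by
  simpa using sum_integral_sphereCoord_sq_mul (integrable_const (1 : ℝ) (μ := μ))

end Integrals

theorem hersch_bound_paneitz_sphere_rigidity_general
    (μ : Measure (Metric.sphere (0 : EuclideanSpace ℝ (Fin 5)) 1)) [IsFiniteMeasure μ]
    (w : Metric.sphere (0 : EuclideanSpace ℝ (Fin 5)) 1 → ℝ)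
    (Pgr Pgw : (Metric.sphere (0 : EuclideanSpace ℝ (Fin 5)) 1 → ℝ) →
               (Metric.sphere (0 : EuclideanSpace ℝ (Fin 5)) 1 → ℝ))
    (lam2 : ℝ)
    (hPgr : ∀ (i : Fin 5) p, Pgr (sphereCoord i) p = 24 * sphereCoord i p)
    (hconf : ∀ (φ : Metric.sphere (0 : EuclideanSpace ℝ (Fin 5)) 1 → ℝ) p,
      Pgw φ p = Real.exp (-(4 : ℝ) * w p) * Pgr φ p)
    (hexp : Integrable (fun p => Real.exp (4 * w p)) μ)
    (hvol : ∫ p, Real.exp (4 * w p) ∂μ = (μ Set.univ).toReal)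
    (hbal : ∀ i : Fin 5, ∫ p, Real.exp (4 * w p) * sphereCoord i p ∂μ = 0)
    (hlam : ∀ φ : Metric.sphere (0 : EuclideanSpace ℝ (Fin 5)) 1 → ℝ,
      (∫ p, φ p * Real.exp (4 * w p) ∂μ) = 0 →
      lam2 * ∫ p, (φ p) ^ 2 * Real.exp (4 * w p) ∂μ ≤ ∫ p, φ p * Pgr φ p ∂μ)
    (hmin : ∀ φ : Metric.sphere (0 : EuclideanSpace ℝ (Fin 5)) 1 → ℝ,
      (∫ p, φ p * Real.exp (4 * w p) ∂μ) = 0 →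
      lam2 * ∫ p, (φ p) ^ 2 * Real.exp (4 * w p) ∂μ = ∫ p, φ p * Pgr φ p ∂μ →
      ∀ p, Pgw φ p = lam2 * φ p)
    (heq : lam2 = 24) :
    (∀ (i : Fin 5) p, Pgw (sphereCoord i) p = 24 * sphereCoord i p) ∧
    (∀ p, Real.exp (4 * w p) = 1) ∧ (∀ p, w p = 0) := by
  subst heq
  have horth (i : Fin 5) : ∫ p, sphereCoord i p * Real.exp (4 * w p) ∂μ = 0 := by
    simpa only [mul_comm] using hbal i
  have henergy (i : Fin 5) :
      ∫ p, sphereCoord i p * Pgr (sphereCoord i) p ∂μ = 24 * ∫ p, sphereCoord i p ^ 2 ∂μ := by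
    rw [← integral_const_mul]
    simp only [hPgr]
    ring_nf
  have hsum : ∑ i, 24 * ∫ p, sphereCoord i p ^ 2 * Real.exp (4 * w p) ∂μ
      = ∑ i, ∫ p, sphereCoord i p * Pgr (sphereCoord i) p ∂μ := by
    rw [← Finset.mul_sum, sum_integral_sphereCoord_sq_mul hexp, hvol, Finset.sum_congr rfl
      fun i _ => henergy i, ← Finset.mul_sum, sum_integral_sphereCoord_sq, Measure.real]
  have hrayleigh_eq := (Finset.sum_eq_sum_iff_of_le fun i _ => hlam _ (horth i)).mp hsum
  have hP (i : Fin 5) : ∀ p, Pgw (sphereCoord i) p = 24 * sphereCoord i p :=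
    hmin _ (horth i) (hrayleigh_eq i (Finset.mem_univ i))
  have hw (p) : w p = 0 := by
    have hfixed (i : Fin 5) : Real.exp (-(4 : ℝ) * w p) * sphereCoord i p = sphereCoord i p := by
      have h := hP i p
      rw [hconf, hPgr] at h
      linear_combination h / 24
    linarith [(Real.exp_eq_one_iff _).mp (eq_one_of_forall_mul_sphereCoord hfixed)]
  exact ⟨hP, fun p => by rw [hw p, mul_zero, Real.exp_zero], hw⟩

/-- Rigidity in the Hersch-type bound.  In the setting of the Hersch bound
on `(S⁴, g_r)` (same-volume conformal metric `g_w = e^{2w} g_r`, balanced condition,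
variational characterization of `λ₂(P_{g_w})` where equality in the Rayleigh quotient
forces the test function to be an eigenfunction, and conformal covariance
`P_{g_w} φ = e^{-4w} P_{g_r} φ` with `P_{g_r} x_i = 24 x_i`), if `λ₂(P_{g_w}) = 24`
then each coordinate function `x_i` is an eigenfunction of `P_{g_w}` with eigenvalue
`24`, and `e^{4w} ≡ 1`, i.e. `w ≡ 0`, so `g_w = g_r`. -/
theorem hersch_bound_paneitz_sphere_rigidity
    (μ : Measure (Metric.sphere (0 : EuclideanSpace ℝ (Fin 5)) 1)) [IsFiniteMeasure μ]
    (hμpos : 0 < (μ Set.univ).toReal)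
    (w : Metric.sphere (0 : EuclideanSpace ℝ (Fin 5)) 1 → ℝ)
    (Pgr Pgw : (Metric.sphere (0 : EuclideanSpace ℝ (Fin 5)) 1 → ℝ) →
               (Metric.sphere (0 : EuclideanSpace ℝ (Fin 5)) 1 → ℝ))
    (lam2 : ℝ)
    (hPgr : ∀ (i : Fin 5) p, Pgr (sphereCoord i) p = 24 * sphereCoord i p)
    (hconf : ∀ (φ : Metric.sphere (0 : EuclideanSpace ℝ (Fin 5)) 1 → ℝ) p,
      Pgw φ p = Real.exp (-(4 : ℝ) * w p) * Pgr φ p)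
    (hexp : Integrable (fun p => Real.exp (4 * w p)) μ)
    (hvol : ∫ p, Real.exp (4 * w p) ∂μ = (μ Set.univ).toReal)
    (hbal : ∀ i : Fin 5, ∫ p, Real.exp (4 * w p) * sphereCoord i p ∂μ = 0)
    (hlam : ∀ φ : Metric.sphere (0 : EuclideanSpace ℝ (Fin 5)) 1 → ℝ,
      (∫ p, φ p * Real.exp (4 * w p) ∂μ) = 0 →
      lam2 * ∫ p, (φ p) ^ 2 * Real.exp (4 * w p) ∂μ ≤ ∫ p, φ p * Pgr φ p ∂μ)
    (hmin : ∀ φ : Metric.sphere (0 : EuclideanSpace ℝ (Fin 5)) 1 → ℝ,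
      (∫ p, φ p * Real.exp (4 * w p) ∂μ) = 0 →
      lam2 * ∫ p, (φ p) ^ 2 * Real.exp (4 * w p) ∂μ = ∫ p, φ p * Pgr φ p ∂μ →
      ∀ p, Pgw φ p = lam2 * φ p)
    (heq : lam2 = 24) :
    (∀ (i : Fin 5) p, Pgw (sphereCoord i) p = 24 * sphereCoord i p) ∧
    (∀ p, Real.exp (4 * w p) = 1) ∧ (∀ p, w p = 0) :=
  hersch_bound_paneitz_sphere_rigidity_general μ w Pgr Pgw lam2 hPgr hconf hexp hvol hbal hlam hmin
    heq
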